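/- For every x ∈ {1, …, L−1}, the local Hamiltonian satisfies the identity H_x = H_{0,x} + (U − U0)(n_{x,↑} n_{x,↓} + n_{x+1,↑} n_{x+1,↓}) + (J − J0)(n_x n_{x+1}/4 − Σ_{l=1}^{3} S_x^{(l)} S_{x+1}^{(l)}) + H_{W,x}. -/
import Mathlib


noncomputable section

/-- `w_x = sin(δ/2)` for odd `x`, `cos(δ/2)` for even `x`. -/
def wR (δ : ℝ) (x : ℕ) : ℝ := if Odd x then Real.sin (δ/2) else Real.cos (δ/2)

/-- On-site potential `μ_x = −(V/2)(1 − (−1)^x cos δ)`. -/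
def muPot (Vv δ : ℝ) (x : ℕ) : ℝ := -(Vv/2) * (1 - (-1 : ℝ)^x * Real.cos δ)

/-- Bond-charge coupling `X_x = (−1)^{x+1} X0` with `X0 = (V/2) sin δ cos δ`. -/
def Xpar (Vv δ : ℝ) (x : ℕ) : ℝ := (-1 : ℝ)^(x+1) * ((Vv/2) * Real.sin δ * Real.cos δ)

/-- The Pauli matrices `p^{(1)}, p^{(2)}, p^{(3)}`; spin indices are `Bool`
with `true = ↑` (first row/column) and `false = ↓`. -/
def pauli : Fin 3 → Bool → Bool → ℂ
  | 0, σ, τ => if σ ≠ τ then 1 else 0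
  | 1, σ, τ => if σ = true ∧ τ = false then -Complex.I
               else if σ = false ∧ τ = true then Complex.I else 0
  | 2, σ, τ => if σ = τ then (if σ = true then 1 else -1) else 0

variable {𝓥 : Type*} [AddCommGroup 𝓥] [Module ℂ 𝓥]

/-- Number operator `n_{x,σ} = c_{x,σ}† c_{x,σ}`. -/
def nOp (c cdag : ℕ → Bool → Module.End ℂ 𝓥) (x : ℕ) (σ : Bool) : Module.End ℂ 𝓥 :=
  cdag x σ * c x σ

/-- Number operator `n_x = n_{x,↑} + n_{x,↓}`. -/
def ntot (c cdag : ℕ → Bool → Module.End ℂ 𝓥) (x : ℕ) : Module.End ℂ 𝓥 :=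
  nOp c cdag x true + nOp c cdag x false

/-- Spin operator `S_x^{(l)} = (1/2) Σ_{σ,τ} c_{x,σ}† p^{(l)}_{σ,τ} c_{x,τ}`. -/
def spinOp (c cdag : ℕ → Bool → Module.End ℂ 𝓥) (x : ℕ) (l : Fin 3) : Module.End ℂ 𝓥 :=
  (1/2 : ℂ) • ∑ σ : Bool, ∑ τ : Bool, pauli l σ τ • (cdag x σ * c x τ)

/-- Hopping term `H_{t,x}`. -/
def Ht (t Vv δ : ℝ) (c cdag : ℕ → Bool → Module.End ℂ 𝓥) (x : ℕ) : Module.End ℂ 𝓥 :=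
  (-t : ℂ) • ∑ σ : Bool, (cdag x σ * c (x+1) σ + cdag (x+1) σ * c x σ)
    - (muPot Vv δ x : ℂ) • ntot c cdag x - (muPot Vv δ (x+1) : ℂ) • ntot c cdag (x+1)

/-- On-site interaction `H_{U,x}`. -/
def HU (U : ℝ) (c cdag : ℕ → Bool → Module.End ℂ 𝓥) (x : ℕ) : Module.End ℂ 𝓥 :=
  (U : ℂ) • (nOp c cdag x true * nOp c cdag x false
    + nOp c cdag (x+1) true * nOp c cdag (x+1) false)

/-- Charge-charge interaction `H_{V,x} = −V n_x n_{x+1}`. -/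
def HV (Vv : ℝ) (c cdag : ℕ → Bool → Module.End ℂ 𝓥) (x : ℕ) : Module.End ℂ 𝓥 :=
  (-Vv : ℂ) • (ntot c cdag x * ntot c cdag (x+1))

/-- Spin-spin interaction `H_{J,x} = J(n_x n_{x+1}/4 − S_x · S_{x+1})`. -/
def HJ (J : ℝ) (c cdag : ℕ → Bool → Module.End ℂ 𝓥) (x : ℕ) : Module.End ℂ 𝓥 :=
  (J : ℂ) • ((1/4 : ℂ) • (ntot c cdag x * ntot c cdag (x+1))
    - ∑ l : Fin 3, spinOp c cdag x l * spinOp c cdag (x+1) l)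

/-- Bond-charge interaction `H_{X,x}` with `X_x = (−1)^{x+1} X0`. -/
def HX (Vv δ : ℝ) (c cdag : ℕ → Bool → Module.End ℂ 𝓥) (x : ℕ) : Module.End ℂ 𝓥 :=
  ∑ σ : Bool,
    ((Xpar Vv δ x : ℂ) • nOp c cdag x (!σ) + (Xpar Vv δ (x+1) : ℂ) • nOp c cdag (x+1) (!σ))
      * (cdag x σ * c (x+1) σ + cdag (x+1) σ * c x σ)

/-- The local Hamiltonian `H_x = H_{t,x} + H_{U,x} + H_{V,x} + H_{J,x} + H_{X,x}`. -/
def Hloc (t Vv δ U J : ℝ) (c cdag : ℕ → Bool → Module.End ℂ 𝓥) (x : ℕ) : Module.End ℂ 𝓥 :=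
  Ht t Vv δ c cdag x + HU U c cdag x + HV Vv c cdag x + HJ J c cdag x + HX Vv δ c cdag x

/-- `a_{x,σ} = w_{x+1} c_{x,σ} − w_x c_{x+1,σ}` for `1 ≤ x ≤ L−1`. -/
def aSp (δ : ℝ) (c : ℕ → Bool → Module.End ℂ 𝓥) (x : ℕ) (σ : Bool) : Module.End ℂ 𝓥 :=
  (wR δ (x+1) : ℂ) • c x σ - (wR δ x : ℂ) • c (x+1) σ

/-- `b_{x,σ} = w_x c_{x,σ} + w_{x+1} c_{x+1,σ}` for `1 ≤ x ≤ L−1`. -/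
def bSp (δ : ℝ) (c : ℕ → Bool → Module.End ℂ 𝓥) (x : ℕ) (σ : Bool) : Module.End ℂ 𝓥 :=
  (wR δ x : ℂ) • c x σ + (wR δ (x+1) : ℂ) • c (x+1) σ

/-- `H_{0,x} = V(a_{x,↑}† b_{x,↑} + a_{x,↓}† b_{x,↓})(b_{x,↑}† a_{x,↑} + b_{x,↓}† a_{x,↓})`. -/
def H0 (Vv δ : ℝ) (c cdag : ℕ → Bool → Module.End ℂ 𝓥) (x : ℕ) : Module.End ℂ 𝓥 :=
  (Vv : ℂ) • ((aSp δ cdag x true * bSp δ c x true + aSp δ cdag x false * bSp δ c x false)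
    * (bSp δ cdag x true * aSp δ c x true + bSp δ cdag x false * aSp δ c x false))

/-- `H_{W,x} = (U0/2)(c_{x,↑}† c_{x,↓}† + c_{x+1,↑}† c_{x+1,↓}†)(c_{x,↓} c_{x,↑} + c_{x+1,↓} c_{x+1,↑})`
with `U0 = V sin²δ`. -/
def HW (Vv δ : ℝ) (c cdag : ℕ → Bool → Module.End ℂ 𝓥) (x : ℕ) : Module.End ℂ 𝓥 :=
  ((Vv * Real.sin δ ^ 2 / 2 : ℝ) : ℂ) •
    ((cdag x true * cdag x false + cdag (x+1) true * cdag (x+1) false)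
      * (c x false * c x true + c (x+1) false * c (x+1) true))



theorem swap_pair {R : Type*} [Ring R] {p q : R} (h : p*q + q*p = 0) : q*p = -(p*q) := by
  have h' : q*p + p*q = 0 := by rw [add_comm]; exact h
  exact eq_neg_of_add_eq_zero_left h'

theorem swap_pair' {R : Type*} [Ring R] {p q : R} (h : p*q + q*p = 0) (z : R) :
    q*(p*z) = -(p*(q*z)) := by
  rw [← mul_assoc, swap_pair h, neg_mul, mul_assoc]

theorem dc_zero {R : Type*} [Ring R] {d q : R} (h : d*q + q*d = 0) : q*d = -(d*q) :=
  swap_pair h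

theorem dc_zero' {R : Type*} [Ring R] {d q : R} (h : d*q + q*d = 0) (z : R) :
    q*(d*z) = -(d*(q*z)) := swap_pair' h z

theorem dc_one {R : Type*} [Ring R] {d q : R} (h : d*q + q*d = 1) : q*d = 1 - d*q := by
  rw [eq_sub_iff_add_eq, add_comm]; exact h

theorem dc_one' {R : Type*} [Ring R] {d q : R} (h : d*q + q*d = 1) (z : R) :
    q*(d*z) = z - d*(q*z) := by
  rw [← mul_assoc, dc_one h, sub_mul, one_mul, mul_assoc]

theorem sq_zero {p : Module.End ℂ 𝓥} (h : p*p + p*p = 0) : p*p = 0 := by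
  have h2 : (2:ℂ) • (p*p) = 0 := by rw [two_smul]; exact h
  rcases smul_eq_zero.mp h2 with h3 | h3
  · exact absurd h3 (by norm_num)
  · exact h3

theorem sq_zero' {p : Module.End ℂ 𝓥} (h : p*p + p*p = 0) (z : Module.End ℂ 𝓥) :
    p*(p*z) = 0 := by rw [← mul_assoc, sq_zero h, zero_mul]

set_option maxHeartbeats 1000000 in
theorem SSexp (c cdag : ℕ → Bool → Module.End ℂ 𝓥) (x y : ℕ) :
    ∑ l : Fin 3, spinOp c cdag x l * spinOp c cdag y l
      = (1/2 : ℂ) • (cdag x true * c x false * (cdag y false * c y true))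
        + (1/2 : ℂ) • (cdag x false * c x true * (cdag y true * c y false))
        + (1/4 : ℂ) • (cdag x true * c x true * (cdag y true * c y true))
        - (1/4 : ℂ) • (cdag x true * c x true * (cdag y false * c y false))
        - (1/4 : ℂ) • (cdag x false * c x false * (cdag y true * c y true))
        + (1/4 : ℂ) • (cdag x false * c x false * (cdag y false * c y false)) := by
  simp only [spinOp, pauli, Fin.sum_univ_three, Fintype.sum_bool]
  norm_num
  simp only [smul_smul, smul_mul_assoc, mul_smul_comm, mul_assoc, smul_add, smul_sub,
    mul_add, add_mul, mul_sub, sub_mul, neg_mul, mul_neg, smul_neg, neg_neg, one_mul, mul_one]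
  match_scalars <;>
    first
      | ring1
      | linear_combination (1/4 : ℂ) * Complex.I_sq
      | linear_combination (-1/4 : ℂ) * Complex.I_sq
      | linear_combination (1/2 : ℂ) * Complex.I_sq
      | linear_combination (-1/2 : ℂ) * Complex.I_sq

set_option maxHeartbeats 16000000 in
theorem key (Vv δ U J t A B : ℝ) (x : ℕ)
    (c cdag : ℕ → Bool → Module.End ℂ 𝓥)
    (hAB : A^2 + B^2 = 1)
    (hw1 : wR δ x = A) (hw2 : wR δ (x+1) = B)
    (hmu1 : muPot Vv δ x = -(Vv*B^2)) (hmu2 : muPot Vv δ (x+1) = -(Vv*A^2))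
    (hX1 : Xpar Vv δ x = Vv*(A*B)*(B^2-A^2))
    (hX2 : Xpar Vv δ (x+1) = -(Vv*(A*B)*(B^2-A^2)))
    (ht : t = Vv*(A*B)) (hsin : Real.sin δ = 2*(A*B))
    (hcc : ∀ y z, (y = x ∨ y = x+1) → (z = x ∨ z = x+1) → ∀ σ τ : Bool,
      c y σ * c z τ + c z τ * c y σ = 0)
    (hdd : ∀ y z, (y = x ∨ y = x+1) → (z = x ∨ z = x+1) → ∀ σ τ : Bool,
      cdag y σ * cdag z τ + cdag z τ * cdag y σ = 0)
    (hdc : ∀ y z, (y = x ∨ y = x+1) → (z = x ∨ z = x+1) → ∀ σ τ : Bool,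
      cdag y σ * c z τ + c z τ * cdag y σ = if y = z ∧ σ = τ then 1 else 0) :
    Hloc t Vv δ U J c cdag x
      = H0 Vv δ c cdag x
        + HU (U - Vv * Real.sin δ ^ 2) c cdag x
        + HJ (J - Vv * (2 - Real.sin δ ^ 2)) c cdag x
        + HW Vv δ c cdag x := by
  have hne : x ≠ x+1 := by omega
  have sc10 : c x false * c x true = -(c x true * c x false) := swap_pair (hcc x x (Or.inl rfl) (Or.inl rfl) true false)
  have sc10m : ∀ z : Module.End ℂ 𝓥, c x false * (c x true * z) = -(c x true * (c x false * z)) := swap_pair' (hcc x x (Or.inl rfl) (Or.inl rfl) true false)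
  have sc20 : c (x+1) true * c x true = -(c x true * c (x+1) true) := swap_pair (hcc x (x+1) (Or.inl rfl) (Or.inr rfl) true true)
  have sc20m : ∀ z : Module.End ℂ 𝓥, c (x+1) true * (c x true * z) = -(c x true * (c (x+1) true * z)) := swap_pair' (hcc x (x+1) (Or.inl rfl) (Or.inr rfl) true true)
  have sc30 : c (x+1) false * c x true = -(c x true * c (x+1) false) := swap_pair (hcc x (x+1) (Or.inl rfl) (Or.inr rfl) true false)
  have sc30m : ∀ z : Module.End ℂ 𝓥, c (x+1) false * (c x true * z) = -(c x true * (c (x+1) false * z)) := swap_pair' (hcc x (x+1) (Or.inl rfl) (Or.inr rfl) true false)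
  have qc0 : c x true * c x true = 0 := sq_zero (hcc x x (Or.inl rfl) (Or.inl rfl) true true)
  have qc0m : ∀ z : Module.End ℂ 𝓥, c x true * (c x true * z) = 0 := sq_zero' (hcc x x (Or.inl rfl) (Or.inl rfl) true true)
  have sc21 : c (x+1) true * c x false = -(c x false * c (x+1) true) := swap_pair (hcc x (x+1) (Or.inl rfl) (Or.inr rfl) false true)
  have sc21m : ∀ z : Module.End ℂ 𝓥, c (x+1) true * (c x false * z) = -(c x false * (c (x+1) true * z)) := swap_pair' (hcc x (x+1) (Or.inl rfl) (Or.inr rfl) false true)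
  have sc31 : c (x+1) false * c x false = -(c x false * c (x+1) false) := swap_pair (hcc x (x+1) (Or.inl rfl) (Or.inr rfl) false false)
  have sc31m : ∀ z : Module.End ℂ 𝓥, c (x+1) false * (c x false * z) = -(c x false * (c (x+1) false * z)) := swap_pair' (hcc x (x+1) (Or.inl rfl) (Or.inr rfl) false false)
  have qc1 : c x false * c x false = 0 := sq_zero (hcc x x (Or.inl rfl) (Or.inl rfl) false false)
  have qc1m : ∀ z : Module.End ℂ 𝓥, c x false * (c x false * z) = 0 := sq_zero' (hcc x x (Or.inl rfl) (Or.inl rfl) false false)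
  have sc32 : c (x+1) false * c (x+1) true = -(c (x+1) true * c (x+1) false) := swap_pair (hcc (x+1) (x+1) (Or.inr rfl) (Or.inr rfl) true false)
  have sc32m : ∀ z : Module.End ℂ 𝓥, c (x+1) false * (c (x+1) true * z) = -(c (x+1) true * (c (x+1) false * z)) := swap_pair' (hcc (x+1) (x+1) (Or.inr rfl) (Or.inr rfl) true false)
  have qc2 : c (x+1) true * c (x+1) true = 0 := sq_zero (hcc (x+1) (x+1) (Or.inr rfl) (Or.inr rfl) true true)
  have qc2m : ∀ z : Module.End ℂ 𝓥, c (x+1) true * (c (x+1) true * z) = 0 := sq_zero' (hcc (x+1) (x+1) (Or.inr rfl) (Or.inr rfl) true true)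
  have qc3 : c (x+1) false * c (x+1) false = 0 := sq_zero (hcc (x+1) (x+1) (Or.inr rfl) (Or.inr rfl) false false)
  have qc3m : ∀ z : Module.End ℂ 𝓥, c (x+1) false * (c (x+1) false * z) = 0 := sq_zero' (hcc (x+1) (x+1) (Or.inr rfl) (Or.inr rfl) false false)
  have sd10 : cdag x false * cdag x true = -(cdag x true * cdag x false) := swap_pair (hdd x x (Or.inl rfl) (Or.inl rfl) true false)
  have sd10m : ∀ z : Module.End ℂ 𝓥, cdag x false * (cdag x true * z) = -(cdag x true * (cdag x false * z)) := swap_pair' (hdd x x (Or.inl rfl) (Or.inl rfl) true false)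
  have sd20 : cdag (x+1) true * cdag x true = -(cdag x true * cdag (x+1) true) := swap_pair (hdd x (x+1) (Or.inl rfl) (Or.inr rfl) true true)
  have sd20m : ∀ z : Module.End ℂ 𝓥, cdag (x+1) true * (cdag x true * z) = -(cdag x true * (cdag (x+1) true * z)) := swap_pair' (hdd x (x+1) (Or.inl rfl) (Or.inr rfl) true true)
  have sd30 : cdag (x+1) false * cdag x true = -(cdag x true * cdag (x+1) false) := swap_pair (hdd x (x+1) (Or.inl rfl) (Or.inr rfl) true false)
  have sd30m : ∀ z : Module.End ℂ 𝓥, cdag (x+1) false * (cdag x true * z) = -(cdag x true * (cdag (x+1) false * z)) := swap_pair' (hdd x (x+1) (Or.inl rfl) (Or.inr rfl) true false)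
  have qd0 : cdag x true * cdag x true = 0 := sq_zero (hdd x x (Or.inl rfl) (Or.inl rfl) true true)
  have qd0m : ∀ z : Module.End ℂ 𝓥, cdag x true * (cdag x true * z) = 0 := sq_zero' (hdd x x (Or.inl rfl) (Or.inl rfl) true true)
  have sd21 : cdag (x+1) true * cdag x false = -(cdag x false * cdag (x+1) true) := swap_pair (hdd x (x+1) (Or.inl rfl) (Or.inr rfl) false true)
  have sd21m : ∀ z : Module.End ℂ 𝓥, cdag (x+1) true * (cdag x false * z) = -(cdag x false * (cdag (x+1) true * z)) := swap_pair' (hdd x (x+1) (Or.inl rfl) (Or.inr rfl) false true)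
  have sd31 : cdag (x+1) false * cdag x false = -(cdag x false * cdag (x+1) false) := swap_pair (hdd x (x+1) (Or.inl rfl) (Or.inr rfl) false false)
  have sd31m : ∀ z : Module.End ℂ 𝓥, cdag (x+1) false * (cdag x false * z) = -(cdag x false * (cdag (x+1) false * z)) := swap_pair' (hdd x (x+1) (Or.inl rfl) (Or.inr rfl) false false)
  have qd1 : cdag x false * cdag x false = 0 := sq_zero (hdd x x (Or.inl rfl) (Or.inl rfl) false false)
  have qd1m : ∀ z : Module.End ℂ 𝓥, cdag x false * (cdag x false * z) = 0 := sq_zero' (hdd x x (Or.inl rfl) (Or.inl rfl) false false)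
  have sd32 : cdag (x+1) false * cdag (x+1) true = -(cdag (x+1) true * cdag (x+1) false) := swap_pair (hdd (x+1) (x+1) (Or.inr rfl) (Or.inr rfl) true false)
  have sd32m : ∀ z : Module.End ℂ 𝓥, cdag (x+1) false * (cdag (x+1) true * z) = -(cdag (x+1) true * (cdag (x+1) false * z)) := swap_pair' (hdd (x+1) (x+1) (Or.inr rfl) (Or.inr rfl) true false)
  have qd2 : cdag (x+1) true * cdag (x+1) true = 0 := sq_zero (hdd (x+1) (x+1) (Or.inr rfl) (Or.inr rfl) true true)
  have qd2m : ∀ z : Module.End ℂ 𝓥, cdag (x+1) true * (cdag (x+1) true * z) = 0 := sq_zero' (hdd (x+1) (x+1) (Or.inr rfl) (Or.inr rfl) true true)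
  have qd3 : cdag (x+1) false * cdag (x+1) false = 0 := sq_zero (hdd (x+1) (x+1) (Or.inr rfl) (Or.inr rfl) false false)
  have qd3m : ∀ z : Module.End ℂ 𝓥, cdag (x+1) false * (cdag (x+1) false * z) = 0 := sq_zero' (hdd (x+1) (x+1) (Or.inr rfl) (Or.inr rfl) false false)
  have m00 : c x true * cdag x true = 1 - cdag x true * c x true := dc_one (by simpa using (hdc x x (Or.inl rfl) (Or.inl rfl) true true))
  have m00m : ∀ z : Module.End ℂ 𝓥, c x true * (cdag x true * z) = z - cdag x true * (c x true * z) := dc_one' (by simpa using (hdc x x (Or.inl rfl) (Or.inl rfl) true true))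
  have m10 : c x false * cdag x true = -(cdag x true * c x false) := dc_zero (by simpa [hne] using (hdc x x (Or.inl rfl) (Or.inl rfl) true false))
  have m10m : ∀ z : Module.End ℂ 𝓥, c x false * (cdag x true * z) = -(cdag x true * (c x false * z)) := dc_zero' (by simpa [hne] using (hdc x x (Or.inl rfl) (Or.inl rfl) true false))
  have m20 : c (x+1) true * cdag x true = -(cdag x true * c (x+1) true) := dc_zero (by simpa [hne] using (hdc x (x+1) (Or.inl rfl) (Or.inr rfl) true true))
  have m20m : ∀ z : Module.End ℂ 𝓥, c (x+1) true * (cdag x true * z) = -(cdag x true * (c (x+1) true * z)) := dc_zero' (by simpa [hne] using (hdc x (x+1) (Or.inl rfl) (Or.inr rfl) true true))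
  have m30 : c (x+1) false * cdag x true = -(cdag x true * c (x+1) false) := dc_zero (by simpa [hne] using (hdc x (x+1) (Or.inl rfl) (Or.inr rfl) true false))
  have m30m : ∀ z : Module.End ℂ 𝓥, c (x+1) false * (cdag x true * z) = -(cdag x true * (c (x+1) false * z)) := dc_zero' (by simpa [hne] using (hdc x (x+1) (Or.inl rfl) (Or.inr rfl) true false))
  have m01 : c x true * cdag x false = -(cdag x false * c x true) := dc_zero (by simpa [hne] using (hdc x x (Or.inl rfl) (Or.inl rfl) false true))
  have m01m : ∀ z : Module.End ℂ 𝓥, c x true * (cdag x false * z) = -(cdag x false * (c x true * z)) := dc_zero' (by simpa [hne] using (hdc x x (Or.inl rfl) (Or.inl rfl) false true))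
  have m11 : c x false * cdag x false = 1 - cdag x false * c x false := dc_one (by simpa using (hdc x x (Or.inl rfl) (Or.inl rfl) false false))
  have m11m : ∀ z : Module.End ℂ 𝓥, c x false * (cdag x false * z) = z - cdag x false * (c x false * z) := dc_one' (by simpa using (hdc x x (Or.inl rfl) (Or.inl rfl) false false))
  have m21 : c (x+1) true * cdag x false = -(cdag x false * c (x+1) true) := dc_zero (by simpa [hne] using (hdc x (x+1) (Or.inl rfl) (Or.inr rfl) false true))
  have m21m : ∀ z : Module.End ℂ 𝓥, c (x+1) true * (cdag x false * z) = -(cdag x false * (c (x+1) true * z)) := dc_zero' (by simpa [hne] using (hdc x (x+1) (Or.inl rfl) (Or.inr rfl) false true))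
  have m31 : c (x+1) false * cdag x false = -(cdag x false * c (x+1) false) := dc_zero (by simpa [hne] using (hdc x (x+1) (Or.inl rfl) (Or.inr rfl) false false))
  have m31m : ∀ z : Module.End ℂ 𝓥, c (x+1) false * (cdag x false * z) = -(cdag x false * (c (x+1) false * z)) := dc_zero' (by simpa [hne] using (hdc x (x+1) (Or.inl rfl) (Or.inr rfl) false false))
  have m02 : c x true * cdag (x+1) true = -(cdag (x+1) true * c x true) := dc_zero (by simpa [hne] using (hdc (x+1) x (Or.inr rfl) (Or.inl rfl) true true))
  have m02m : ∀ z : Module.End ℂ 𝓥, c x true * (cdag (x+1) true * z) = -(cdag (x+1) true * (c x true * z)) := dc_zero' (by simpa [hne] using (hdc (x+1) x (Or.inr rfl) (Or.inl rfl) true true))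
  have m12 : c x false * cdag (x+1) true = -(cdag (x+1) true * c x false) := dc_zero (by simpa [hne] using (hdc (x+1) x (Or.inr rfl) (Or.inl rfl) true false))
  have m12m : ∀ z : Module.End ℂ 𝓥, c x false * (cdag (x+1) true * z) = -(cdag (x+1) true * (c x false * z)) := dc_zero' (by simpa [hne] using (hdc (x+1) x (Or.inr rfl) (Or.inl rfl) true false))
  have m22 : c (x+1) true * cdag (x+1) true = 1 - cdag (x+1) true * c (x+1) true := dc_one (by simpa using (hdc (x+1) (x+1) (Or.inr rfl) (Or.inr rfl) true true))
  have m22m : ∀ z : Module.End ℂ 𝓥, c (x+1) true * (cdag (x+1) true * z) = z - cdag (x+1) true * (c (x+1) true * z) := dc_one' (by simpa using (hdc (x+1) (x+1) (Or.inr rfl) (Or.inr rfl) true true))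
  have m32 : c (x+1) false * cdag (x+1) true = -(cdag (x+1) true * c (x+1) false) := dc_zero (by simpa [hne] using (hdc (x+1) (x+1) (Or.inr rfl) (Or.inr rfl) true false))
  have m32m : ∀ z : Module.End ℂ 𝓥, c (x+1) false * (cdag (x+1) true * z) = -(cdag (x+1) true * (c (x+1) false * z)) := dc_zero' (by simpa [hne] using (hdc (x+1) (x+1) (Or.inr rfl) (Or.inr rfl) true false))
  have m03 : c x true * cdag (x+1) false = -(cdag (x+1) false * c x true) := dc_zero (by simpa [hne] using (hdc (x+1) x (Or.inr rfl) (Or.inl rfl) false true))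
  have m03m : ∀ z : Module.End ℂ 𝓥, c x true * (cdag (x+1) false * z) = -(cdag (x+1) false * (c x true * z)) := dc_zero' (by simpa [hne] using (hdc (x+1) x (Or.inr rfl) (Or.inl rfl) false true))
  have m13 : c x false * cdag (x+1) false = -(cdag (x+1) false * c x false) := dc_zero (by simpa [hne] using (hdc (x+1) x (Or.inr rfl) (Or.inl rfl) false false))
  have m13m : ∀ z : Module.End ℂ 𝓥, c x false * (cdag (x+1) false * z) = -(cdag (x+1) false * (c x false * z)) := dc_zero' (by simpa [hne] using (hdc (x+1) x (Or.inr rfl) (Or.inl rfl) false false))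
  have m23 : c (x+1) true * cdag (x+1) false = -(cdag (x+1) false * c (x+1) true) := dc_zero (by simpa [hne] using (hdc (x+1) (x+1) (Or.inr rfl) (Or.inr rfl) false true))
  have m23m : ∀ z : Module.End ℂ 𝓥, c (x+1) true * (cdag (x+1) false * z) = -(cdag (x+1) false * (c (x+1) true * z)) := dc_zero' (by simpa [hne] using (hdc (x+1) (x+1) (Or.inr rfl) (Or.inr rfl) false true))
  have m33 : c (x+1) false * cdag (x+1) false = 1 - cdag (x+1) false * c (x+1) false := dc_one (by simpa using (hdc (x+1) (x+1) (Or.inr rfl) (Or.inr rfl) false false))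
  have m33m : ∀ z : Module.End ℂ 𝓥, c (x+1) false * (cdag (x+1) false * z) = z - cdag (x+1) false * (c (x+1) false * z) := dc_one' (by simpa using (hdc (x+1) (x+1) (Or.inr rfl) (Or.inr rfl) false false))

  have hABc : (A:ℂ)^2 + (B:ℂ)^2 = 1 := by exact_mod_cast congrArg (Complex.ofReal) hAB
  simp only [Hloc, Ht, HU, HV, HJ, HX, H0, HW, nOp, ntot, aSp, bSp]
  simp only [SSexp]
  simp only [hw1, hw2, hmu1, hmu2, hX1, hX2, ht, hsin, Fintype.sum_bool,
    Bool.not_true, Bool.not_false]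
  push_cast
  simp only [mul_add, add_mul, mul_sub, sub_mul, smul_add, smul_sub, mul_smul_comm,
    smul_mul_assoc, smul_smul, mul_assoc, one_mul, mul_one, mul_neg, neg_mul, smul_neg,
    neg_neg, mul_zero, zero_mul, smul_zero, add_zero, zero_add, sub_zero, neg_zero,
    sc10, sc10m, sc20, sc20m, sc30, sc30m, qc0, qc0m, sc21, sc21m, sc31, sc31m, qc1, qc1m,
    sc32, sc32m, qc2, qc2m, qc3, qc3m, sd10, sd10m, sd20, sd20m, sd30, sd30m, qd0, qd0m,
    sd21, sd21m, sd31, sd31m, qd1, qd1m, sd32, sd32m, qd2, qd2m, qd3, qd3m,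
    m00, m00m, m10, m10m, m20, m20m, m30, m30m, m01, m01m, m11, m11m, m21, m21m, m31, m31m,
    m02, m02m, m12, m12m, m22, m22m, m32, m32m, m03, m03m, m13, m13m, m23, m23m, m33, m33m]
  match_scalars <;>
    first
      | ring1
      | linear_combination (-(Vv:ℂ)*(B:ℂ)^2) * hABc
      | linear_combination ((Vv:ℂ)*(B:ℂ)^2) * hABc
      | linear_combination (-(Vv:ℂ)*(A:ℂ)^2) * hABc
      | linear_combination ((Vv:ℂ)*(A:ℂ)^2) * hABc
      | linear_combination ((Vv:ℂ)*(A:ℂ)*(B:ℂ)) * hABc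
      | linear_combination (-(Vv:ℂ)*(A:ℂ)*(B:ℂ)) * hABc
      | linear_combination ((Vv:ℂ)*((A:ℂ)^2+(B:ℂ)^2+1)) * hABc
      | linear_combination (-(Vv:ℂ)*((A:ℂ)^2+(B:ℂ)^2+1)) * hABc

/-- for every `x ∈ {1,…,L−1}`,
`H_x = H_{0,x} + (U−U0)(n_{x,↑}n_{x,↓} + n_{x+1,↑}n_{x+1,↓})
 + (J−J0)(n_x n_{x+1}/4 − S_x·S_{x+1}) + H_{W,x}`. -/
theorem statement4 (L : ℕ) (hL3 : 3 ≤ L) (hLodd : Odd L)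
    (t Vv : ℝ) (ht : 0 < t) (htV : 2*t ≤ Vv)
    (δ : ℝ) (hδ0 : 0 < δ) (hδ1 : δ ≤ Real.pi / 2) (hδ : Real.sin δ = 2*t/Vv)
    (U J : ℝ)
    (c cdag : ℕ → Bool → Module.End ℂ 𝓥)
    (car_cc : ∀ x ∈ Finset.Icc 1 L, ∀ y ∈ Finset.Icc 1 L, ∀ σ τ : Bool,
      c x σ * c y τ + c y τ * c x σ = 0)
    (car_dd : ∀ x ∈ Finset.Icc 1 L, ∀ y ∈ Finset.Icc 1 L, ∀ σ τ : Bool,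
      cdag x σ * cdag y τ + cdag y τ * cdag x σ = 0)
    (car_dc : ∀ x ∈ Finset.Icc 1 L, ∀ y ∈ Finset.Icc 1 L, ∀ σ τ : Bool,
      cdag x σ * c y τ + c y τ * cdag x σ = if x = y ∧ σ = τ then 1 else 0) :
    ∀ x ∈ Finset.Icc 1 (L-1),
      Hloc t Vv δ U J c cdag x
        = H0 Vv δ c cdag x
          + HU (U - Vv * Real.sin δ ^ 2) c cdag x
          + HJ (J - Vv * (2 - Real.sin δ ^ 2)) c cdag x
          + HW Vv δ c cdag x := by
  intro x hx
  rw [Finset.mem_Icc] at hx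
  have hxL : x ∈ Finset.Icc 1 L := by rw [Finset.mem_Icc]; omega
  have hx1L : x+1 ∈ Finset.Icc 1 L := by rw [Finset.mem_Icc]; omega
  have hVpos : 0 < Vv := lt_of_lt_of_le (by linarith) htV
  have hsk : Real.sin (δ/2)^2 + Real.cos (δ/2)^2 = 1 := Real.sin_sq_add_cos_sq _
  set s := Real.sin (δ/2) with hs
  set k := Real.cos (δ/2) with hk
  have h2 : (2:ℝ)*(δ/2) = δ := by ring
  have hsin2 : Real.sin δ = 2*(s*k) := by rw [← h2, Real.sin_two_mul]; ring
  have hcos2 : Real.cos δ = k^2 - s^2 := by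
    rw [← h2, Real.cos_two_mul]; linear_combination hsk
  have ht' : t = Vv*(s*k) := by
    have h := hδ
    rw [hsin2] at h
    field_simp at h
    linarith
  have hcc' : ∀ y z, (y = x ∨ y = x+1) → (z = x ∨ z = x+1) → ∀ σ τ : Bool,
      c y σ * c z τ + c z τ * c y σ = 0 := by
    intro y z hy hz σ τ
    exact car_cc y (by rw [Finset.mem_Icc]; omega) z (by rw [Finset.mem_Icc]; omega) σ τ
  have hdd' : ∀ y z, (y = x ∨ y = x+1) → (z = x ∨ z = x+1) → ∀ σ τ : Bool,
      cdag y σ * cdag z τ + cdag z τ * cdag y σ = 0 := by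
    intro y z hy hz σ τ
    exact car_dd y (by rw [Finset.mem_Icc]; omega) z (by rw [Finset.mem_Icc]; omega) σ τ
  have hdc' : ∀ y z, (y = x ∨ y = x+1) → (z = x ∨ z = x+1) → ∀ σ τ : Bool,
      cdag y σ * c z τ + c z τ * cdag y σ = if y = z ∧ σ = τ then 1 else 0 := by
    intro y z hy hz σ τ
    exact car_dc y (by rw [Finset.mem_Icc]; omega) z (by rw [Finset.mem_Icc]; omega) σ τ
  rcases Nat.even_or_odd x with hpar | hpar
  · -- x even : A = cos(δ/2), B = sin(δ/2)
    have e1 : (-1:ℝ)^x = 1 := hpar.neg_one_pow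
    have e2 : (-1:ℝ)^(x+1) = -1 := by rw [pow_succ, e1]; ring
    have e3 : (-1:ℝ)^(x+1+1) = 1 := by rw [pow_succ, e2]; ring
    refine key Vv δ U J t k s x c cdag (by linear_combination hsk) ?_ ?_ ?_ ?_ ?_ ?_
      (by rw [ht']; ring) (by rw [hsin2]; ring) hcc' hdd' hdc'
    · rw [wR, if_neg (by simpa using (Nat.not_odd_iff_even.mpr hpar))]
    · rw [wR, if_pos hpar.add_one]
    · rw [muPot, e1, hcos2]; linear_combination (Vv/2) * hsk
    · rw [muPot, e2, hcos2]; linear_combination (Vv/2) * hsk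
    · rw [Xpar, e2, hsin2, hcos2]; ring
    · rw [Xpar, e3, hsin2, hcos2]; ring
  · -- x odd : A = sin(δ/2), B = cos(δ/2)
    have e1 : (-1:ℝ)^x = -1 := hpar.neg_one_pow
    have e2 : (-1:ℝ)^(x+1) = 1 := by rw [pow_succ, e1]; ring
    have e3 : (-1:ℝ)^(x+1+1) = -1 := by rw [pow_succ, e2]; ring
    refine key Vv δ U J t s k x c cdag hsk ?_ ?_ ?_ ?_ ?_ ?_
      (by rw [ht']) (by rw [hsin2]) hcc' hdd' hdc'
    · rw [wR, if_pos hpar]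
    · rw [wR, if_neg (by simpa using (Nat.not_odd_iff_even.mpr hpar.add_one))]
    · rw [muPot, e1, hcos2]; linear_combination (Vv/2) * hsk
    · rw [muPot, e2, hcos2]; linear_combination (Vv/2) * hsk
    · rw [Xpar, e2, hsin2, hcos2]; ring
    · rw [Xpar, e3, hsin2, hcos2]; ring
end
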